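/- Let Y be a measurable space, π₀ a probability measure on Y, and r : Y → ℝ measurable, with π₀ a continuous model for r. Let β > 0, Φ : [0,1] → ℝ bounded measurable, and let π* be the probability measure with density y ↦ e^{Φ(C_{r,π₀}(y))/β}/Z with respect to π₀, where Z := ∫₀¹ e^{Φ(u)/β} du. Let g : [0,1] → [0,∞) be bounded measurable with ∫₀¹ g(t) dt > 0, and for a probability measure σ on Y define the calibrated inference-time policy T_g σ as the probability measure with density y ↦ g(C_{r,σ}(y)) / ∫ g(C_{r,σ}(z)) dσ(z) with respect to σ. Then the inference-time win rate satisfies W_r(T_g π* ≻ T_g π₀) = (∫₀¹ e^{Φ(u)/β}·g(F_{Φ,β}(u))·(∫₀ᵘ g(t) dt) du) / ((∫₀¹ e^{Φ(u)/β}·g(F_{Φ,β}(u)) du)·(∫₀¹ g(t) dt)); in particular it depends only on Φ, β and g, not on r or π₀. -/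

import Mathlib

open MeasureTheory

/-- The calibrated reward `C_{r,σ}(y) = σ{z : r(z) < r(y)} + (1/2)·σ{z : r(z) = r(y)}`. -/
noncomputable def calReward {Y : Type*} [MeasurableSpace Y]
    (r : Y → ℝ) (σ : Measure Y) (y : Y) : ℝ :=
  (σ {z | r z < r y}).toReal + (1 / 2) * (σ {z | r z = r y}).toReal

/-- The calibrated inference-time policy `T_g σ`, with density
`y ↦ g(C_{r,σ}(y)) / ∫ g(C_{r,σ}(z)) dσ(z)` with respect to `σ`. -/
noncomputable def calProc {Y : Type*} [MeasurableSpace Y]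
    (r : Y → ℝ) (g : ℝ → ℝ) (σ : Measure Y) : Measure Y :=
  σ.withDensity fun y =>
    ENNReal.ofReal (g (calReward r σ y) / ∫ z, g (calReward r σ z) ∂σ)

/-!
For a continuous model `σ`, the calibrated reward is `C_σ = cdf (r_* σ) ∘ r`, so by the probability
integral transform `C_σ` is uniformly distributed on `(0,1]` under `σ`, and up to the null set of
ties `{z | r z < r y}` is the sublevel set `{z | C_σ z ≤ C_σ y}`. Hence reweighting `σ` by `h ∘ C_σ`
gives mass `H (C_σ y) = ∫₀^{C_σ y} h` to `{r < r y}`: the reweighted model is again continuous,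
with calibrated reward `H ∘ C_σ`. Both `π*` (with `H = F`) and `T_g σ` are such reweightings. So the
inner integral of the win rate is `G (C_{π₀} y) / ∫₀¹ g` with `G u = ∫₀ᵘ g`, and pushing the outer
integral forward along `C_{π₀}` turns it into an integral over `u ∈ (0,1]`.
-/

open ProbabilityTheory Set Filter Topology
open scoped ENNReal

namespace ProbabilityTheory

variable {μ : Measure ℝ} [IsProbabilityMeasure μ] [NullSingletonClass μ]

lemma continuous_cdf : Continuous (cdf μ) := by
  refine continuous_iff_continuousAt.2 fun x => ?_
  rw [(monotone_cdf μ).continuousAt_iff_leftLim_eq_rightLim, StieltjesFunction.rightLim_eq]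
  have h := (cdf μ).measure_singleton x
  rw [measure_cdf, measure_singleton, eq_comm, ENNReal.ofReal_eq_zero, sub_nonpos] at h
  exact le_antisymm ((monotone_cdf μ).leftLim_le le_rfl) h

lemma measure_cdf_preimage_Iic {a : ℝ} (ha₀ : 0 < a) (ha₁ : a < 1) :
    μ (cdf μ ⁻¹' Iic a) = ENNReal.ofReal a := by
  obtain ⟨s, hs⟩ : a ∈ range (cdf μ) :=
    mem_range_of_exists_le_of_exists_ge continuous_cdf
      ((tendsto_cdf_atBot μ).eventually (eventually_le_nhds ha₀)).exists
      ((tendsto_cdf_atTop μ).eventually (eventually_ge_nhds ha₁)).exists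
  have hbdd : BddAbove (cdf μ ⁻¹' Iic a) := by
    obtain ⟨b, hb⟩ := ((tendsto_cdf_atTop μ).eventually (eventually_gt_nhds ha₁)).exists
    exact ⟨b, fun x hx => not_lt.1 fun hbx => (hx.trans_lt hb).not_ge (monotone_cdf μ hbx.le)⟩
  set t := sSup (cdf μ ⁻¹' Iic a)
  have hmem : t ∈ cdf μ ⁻¹' Iic a :=
    (isClosed_Iic.preimage continuous_cdf).csSup_mem ⟨s, hs.le⟩ hbdd
  have hIic : cdf μ ⁻¹' Iic a = Iic t :=
    Subset.antisymm (fun x hx => le_csSup hbdd hx)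
      (fun x hx => (monotone_cdf μ hx).trans hmem)
  have hta : cdf μ t = a := le_antisymm hmem (hs ▸ monotone_cdf μ (le_csSup hbdd hs.le))
  rw [hIic, ← ofReal_cdf, hta]

lemma map_cdf_eq_volume_restrict_Ioc : μ.map (cdf μ) = volume.restrict (Ioc 0 1) := by
  have : IsProbabilityMeasure (volume.restrict (Ioc (0 : ℝ) 1)) := ⟨by simp⟩
  refine Measure.ext_of_Iic _ _ fun a => ?_
  rw [Measure.map_apply continuous_cdf.measurable measurableSet_Iic,
    Measure.restrict_apply measurableSet_Iic]
  rcases lt_or_ge a 1 with ha₁ | ha₁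
  · rcases le_or_gt a 0 with ha₀ | ha₀
    · have hempty : Iic a ∩ Ioc 0 1 = ∅ :=
        eq_empty_of_forall_notMem fun x hx => (hx.1.trans ha₀).not_gt hx.2.1
      rw [hempty, measure_empty, ← nonpos_iff_eq_zero]
      have hlim : Tendsto ENNReal.ofReal (𝓝[>] 0) (𝓝 0) := by
        simpa using (ENNReal.continuous_ofReal.tendsto 0).mono_left nhdsWithin_le_nhds
      refine ge_of_tendsto hlim (eventually_of_mem (Ioo_mem_nhdsGT one_pos) fun ε hε => ?_)
      rw [← measure_cdf_preimage_Iic (μ := μ) hε.1 hε.2]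
      exact measure_mono (preimage_mono (Iic_subset_Iic.2 (ha₀.trans hε.1.le)))
    · rw [measure_cdf_preimage_Iic ha₀ ha₁, Iic_inter_Ioc_of_le ha₁.le, Real.volume_Ioc, sub_zero]
  · have h1 : cdf μ ⁻¹' Iic a = univ := eq_univ_of_forall fun x => (cdf_le_one μ x).trans ha₁
    rw [h1, inter_eq_right.2 fun x hx => hx.2.trans ha₁]
    simp

end ProbabilityTheory

lemma ofReal_intervalIntegral_eq_setLIntegral {h : ℝ → ℝ} {a b : ℝ} (hab : a ≤ b)
    (hh : IntegrableOn h (Ioc a b)) (hh₀ : ∀ u ∈ Ioc a b, 0 ≤ h u) :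
    ENNReal.ofReal (∫ u in a..b, h u) = ∫⁻ u in Ioc a b, ENNReal.ofReal (h u) := by
  rw [intervalIntegral.integral_of_le hab,
    ofReal_integral_eq_lintegral_ofReal hh (ae_restrict_of_forall_mem measurableSet_Ioc hh₀)]

lemma integrableOn_Icc_of_nonneg_of_le {q : ℝ → ℝ} {a b M : ℝ} (hq : Measurable q)
    (h₀ : ∀ u ∈ Icc a b, 0 ≤ q u) (hM : ∀ u ∈ Icc a b, q u ≤ M) : IntegrableOn q (Icc a b) :=
  Measure.integrableOn_of_bounded measure_Icc_lt_top.ne hq.aestronglyMeasurable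
    (ae_restrict_of_forall_mem measurableSet_Icc fun u hu => by
      rw [Real.norm_eq_abs, abs_of_nonneg (h₀ u hu)]; exact hM u hu)

lemma aemeasurable_primitive {h : ℝ → ℝ} {a b : ℝ} (hab : a ≤ b)
    (hi : IntegrableOn h (Icc a b)) :
    AEMeasurable (fun u => ∫ t in a..u, h t) (volume.restrict (Ioc a b)) := by
  rw [← uIcc_of_le hab] at hi
  exact ((intervalIntegral.continuousOn_primitive_interval hi).mono
    (uIcc_of_le hab ▸ Ioc_subset_Icc_self)).aemeasurable measurableSet_Ioc

section CalibratedReward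

variable {Y : Type*} [MeasurableSpace Y] {σ : Measure Y} {r : Y → ℝ}

lemma nullSingletonClass_map (hr : Measurable r) (hσ : ∀ t, σ {z | r z = t} = 0) :
    NullSingletonClass (σ.map r) :=
  ⟨fun t => by rw [Measure.map_apply hr (measurableSet_singleton t)]; exact hσ t⟩

variable [IsProbabilityMeasure σ]

lemma calReward_eq_cdf_map (hr : Measurable r) (hσ : ∀ t, σ {z | r z = t} = 0) :
    calReward r σ = cdf (σ.map r) ∘ r := by
  have := Measure.isProbabilityMeasure_map (μ := σ) hr.aemeasurable
  have := nullSingletonClass_map hr hσ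
  funext y
  rw [calReward, hσ, Function.comp_apply, cdf_eq_real, measureReal_def,
    ← measure_congr Iio_ae_eq_Iic, Measure.map_apply hr measurableSet_Iio]
  simp [preimage, Iio]

lemma monotone_calReward (hr : Measurable r) (hσ : ∀ t, σ {z | r z = t} = 0) {y z : Y}
    (h : r y ≤ r z) : calReward r σ y ≤ calReward r σ z := by
  rw [calReward_eq_cdf_map hr hσ]
  exact monotone_cdf _ h

lemma measurable_calReward (hr : Measurable r) (hσ : ∀ t, σ {z | r z = t} = 0) :
    Measurable (calReward r σ) := by
  rw [calReward_eq_cdf_map hr hσ]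
  exact (monotone_cdf _).measurable.comp hr

lemma calReward_mem_Icc (hr : Measurable r) (hσ : ∀ t, σ {z | r z = t} = 0) (y : Y) :
    calReward r σ y ∈ Icc 0 1 := by
  rw [calReward_eq_cdf_map hr hσ]
  exact ⟨cdf_nonneg _ _, cdf_le_one _ _⟩

lemma map_calReward (hr : Measurable r) (hσ : ∀ t, σ {z | r z = t} = 0) :
    σ.map (calReward r σ) = volume.restrict (Ioc 0 1) := by
  have := Measure.isProbabilityMeasure_map (μ := σ) hr.aemeasurable
  have := nullSingletonClass_map hr hσ
  rw [calReward_eq_cdf_map hr hσ, ← Measure.map_map (monotone_cdf _).measurable hr,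
    map_cdf_eq_volume_restrict_Ioc]

lemma lintegral_comp_calReward (hr : Measurable r) (hσ : ∀ t, σ {z | r z = t} = 0)
    {h : ℝ → ℝ≥0∞} (hh : Measurable h) :
    ∫⁻ z, h (calReward r σ z) ∂σ = ∫⁻ u in Ioc 0 1, h u := by
  rw [← lintegral_map hh (measurable_calReward hr hσ), map_calReward hr hσ]

lemma integral_comp_calReward (hr : Measurable r) (hσ : ∀ t, σ {z | r z = t} = 0)
    {q : ℝ → ℝ} (hq : AEStronglyMeasurable q (volume.restrict (Ioc 0 1))) :
    ∫ z, q (calReward r σ z) ∂σ = ∫ u in 0..1, q u := by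
  rw [intervalIntegral.integral_of_le zero_le_one, ← map_calReward hr hσ,
    integral_map (measurable_calReward hr hσ).aemeasurable (by rwa [map_calReward hr hσ])]

lemma setLIntegral_lt_comp_calReward (hr : Measurable r) (hσ : ∀ t, σ {z | r z = t} = 0)
    {h : ℝ → ℝ≥0∞} (hh : Measurable h) (y : Y) :
    ∫⁻ z in {z | r z < r y}, h (calReward r σ z) ∂σ = ∫⁻ u in Ioc 0 (calReward r σ y), h u := by
  have hC := measurable_calReward hr hσ
  set c := calReward r σ y
  have hnull : σ (calReward r σ ⁻¹' {c}) = 0 := by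
    rw [← Measure.map_apply hC (measurableSet_singleton c), map_calReward hr hσ,
      measure_singleton]
  have hae : {z | r z < r y} =ᵐ[σ] calReward r σ ⁻¹' Iic c := by
    refine ae_eq_set.2 ⟨?_, measure_mono_null (fun z hz => ?_) hnull⟩
    · exact measure_mono_null (fun z hz => hz.2 (monotone_calReward hr hσ hz.1.le)) measure_empty
    · exact le_antisymm hz.1 (monotone_calReward hr hσ (not_lt.1 hz.2))
  rw [setLIntegral_congr hae, ← setLIntegral_map measurableSet_Iic hh hC, map_calReward hr hσ,
    Measure.restrict_restrict measurableSet_Iic,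
    Iic_inter_Ioc_of_le (calReward_mem_Icc hr hσ y).2]

end CalibratedReward

/-- The aligned policy `π*` (with `h = e^{Φ/β}/Z`) and `T_g σ` (with `h = g / ∫₀¹ g`) are both of
this form. -/
noncomputable def calReweight {Y : Type*} [MeasurableSpace Y] (r : Y → ℝ) (h : ℝ → ℝ)
    (σ : Measure Y) : Measure Y :=
  σ.withDensity fun y => ENNReal.ofReal (h (calReward r σ y))

section CalReweight

variable {Y : Type*} [MeasurableSpace Y] {σ : Measure Y} {r : Y → ℝ} {h : ℝ → ℝ}

lemma calReweight_apply_eq_zero (hσ : ∀ t, σ {z | r z = t} = 0) (t : ℝ) :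
    calReweight r h σ {z | r z = t} = 0 :=
  withDensity_absolutelyContinuous _ _ (hσ t)

variable [IsProbabilityMeasure σ]

lemma calReweight_apply_lt (hr : Measurable r) (hσ : ∀ t, σ {z | r z = t} = 0)
    (hm : Measurable h) (hi : IntegrableOn h (Icc 0 1)) (h₀ : ∀ u ∈ Icc 0 1, 0 ≤ h u) (y : Y) :
    calReweight r h σ {z | r z < r y} = ENNReal.ofReal (∫ u in 0..calReward r σ y, h u) := by
  obtain ⟨hc₀, hc₁⟩ := calReward_mem_Icc hr hσ y
  have hsub : Ioc 0 (calReward r σ y) ⊆ Icc 0 1 :=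
    Ioc_subset_Icc_self.trans (Icc_subset_Icc_right hc₁)
  rw [calReweight, withDensity_apply _ (measurableSet_lt hr measurable_const),
    setLIntegral_lt_comp_calReward hr hσ hm.ennreal_ofReal,
    ofReal_intervalIntegral_eq_setLIntegral hc₀ (hi.mono_set hsub) fun u hu => h₀ u (hsub hu)]

lemma isProbabilityMeasure_calReweight (hr : Measurable r) (hσ : ∀ t, σ {z | r z = t} = 0)
    (hm : Measurable h) (hi : IntegrableOn h (Icc 0 1)) (h₀ : ∀ u ∈ Icc 0 1, 0 ≤ h u)
    (h₁ : ∫ u in 0..1, h u = 1) : IsProbabilityMeasure (calReweight r h σ) := by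
  refine ⟨?_⟩
  rw [calReweight, withDensity_apply _ MeasurableSet.univ, Measure.restrict_univ,
    lintegral_comp_calReward hr hσ hm.ennreal_ofReal,
    ← ofReal_intervalIntegral_eq_setLIntegral zero_le_one (hi.mono_set Ioc_subset_Icc_self)
      fun u hu => h₀ u (Ioc_subset_Icc_self hu), h₁, ENNReal.ofReal_one]

lemma calReward_calReweight (hr : Measurable r) (hσ : ∀ t, σ {z | r z = t} = 0)
    (hm : Measurable h) (hi : IntegrableOn h (Icc 0 1)) (h₀ : ∀ u ∈ Icc 0 1, 0 ≤ h u) (y : Y) :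
    calReward r (calReweight r h σ) y = ∫ u in 0..calReward r σ y, h u := by
  obtain ⟨hc₀, hc₁⟩ := calReward_mem_Icc hr hσ y
  rw [calReward, calReweight_apply_lt hr hσ hm hi h₀, calReweight_apply_eq_zero hσ,
    ENNReal.toReal_ofReal (intervalIntegral.integral_nonneg hc₀ fun u hu =>
      h₀ u ⟨hu.1, hu.2.trans hc₁⟩)]
  simp

lemma integral_calReweight (hr : Measurable r) (hσ : ∀ t, σ {z | r z = t} = 0)
    (hm : Measurable h) (h₀ : ∀ u ∈ Icc 0 1, 0 ≤ h u) (q : Y → ℝ) :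
    ∫ y, q y ∂calReweight r h σ = ∫ y, h (calReward r σ y) * q y ∂σ := by
  have hd : Measurable fun y => ENNReal.ofReal (h (calReward r σ y)) :=
    (hm.comp (measurable_calReward hr hσ)).ennreal_ofReal
  rw [calReweight, integral_withDensity_eq_integral_toReal_smul hd
    (ae_of_all _ fun _ => ENNReal.ofReal_lt_top)]
  refine integral_congr_ae (ae_of_all _ fun y => ?_)
  simp only [ENNReal.toReal_ofReal (h₀ _ (calReward_mem_Icc hr hσ y)), smul_eq_mul]

lemma integral_comp_calReward_calReweight (hr : Measurable r) (hσ : ∀ t, σ {z | r z = t} = 0)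
    (hm : Measurable h) (h₀ : ∀ u ∈ Icc 0 1, 0 ≤ h u) {q : ℝ → ℝ}
    (hq : AEMeasurable q (volume.restrict (Ioc 0 1))) :
    ∫ y, q (calReward r σ y) ∂calReweight r h σ = ∫ u in 0..1, h u * q u := by
  rw [integral_calReweight hr hσ hm h₀]
  exact integral_comp_calReward hr hσ (hm.aemeasurable.mul hq).aestronglyMeasurable

end CalReweight

/-- The win rate `W_r(π₁ ≻ π₂)`. -/
noncomputable def winRate {Y : Type*} [MeasurableSpace Y] (r : Y → ℝ) (π₁ π₂ : Measure Y) : ℝ :=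
  ∫ y, ∫ z, ((if r z < r y then (1 : ℝ) else 0) + (if r y = r z then 1 / 2 else 0)) ∂π₂ ∂π₁

section CalProc

variable {Y : Type*} [MeasurableSpace Y] {σ : Measure Y} [IsProbabilityMeasure σ] {r : Y → ℝ}
  {g : ℝ → ℝ}

lemma calProc_eq_calReweight (hr : Measurable r) (hσ : ∀ t, σ {z | r z = t} = 0)
    (hg : AEStronglyMeasurable g (volume.restrict (Ioc 0 1))) :
    calProc r g σ = calReweight r (fun u => g u / ∫ t in 0..1, g t) σ := by
  rw [calProc, integral_comp_calReward hr hσ hg, calReweight]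

lemma integral_win_calProc (hr : Measurable r) (hσ : ∀ t, σ {z | r z = t} = 0)
    (hgm : Measurable g) (hgi : IntegrableOn g (Icc 0 1)) (hg₀ : ∀ u ∈ Icc 0 1, 0 ≤ g u)
    (y : Y) :
    ∫ z, ((if r z < r y then (1 : ℝ) else 0) + (if r y = r z then 1 / 2 else 0)) ∂calProc r g σ
      = (∫ t in 0..calReward r σ y, g t) / ∫ t in 0..1, g t := by
  have hB : 0 ≤ ∫ t in 0..1, g t := intervalIntegral.integral_nonneg zero_le_one hg₀
  have hG : 0 ≤ ∫ t in 0..calReward r σ y, g t / ∫ t in 0..1, g t := by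
    obtain ⟨hc₀, hc₁⟩ := calReward_mem_Icc hr hσ y
    exact intervalIntegral.integral_nonneg hc₀ fun u hu =>
      div_nonneg (hg₀ u ⟨hu.1, hu.2.trans hc₁⟩) hB
  rw [calProc_eq_calReweight hr hσ hgm.aestronglyMeasurable]
  have hties : ∀ᵐ z ∂calReweight r (fun u => g u / ∫ t in 0..1, g t) σ, r z ≠ r y :=
    measure_eq_zero_iff_ae_notMem.1 (calReweight_apply_eq_zero hσ (r y))
  rw [integral_congr_ae (g := {z | r z < r y}.indicator 1) (hties.mono fun z hz => by
      simp [indicator, Ne.symm hz]),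
    integral_indicator_one (measurableSet_lt hr measurable_const), measureReal_def,
    calReweight_apply_lt hr hσ (hgm.div_const _) (hgi.div_const _)
      (fun u hu => div_nonneg (hg₀ u hu) hB),
    ENNReal.toReal_ofReal hG, intervalIntegral.integral_div]

theorem winRate_calProc_calReweight (hr : Measurable r) (hσ : ∀ t, σ {z | r z = t} = 0)
    {h : ℝ → ℝ} (hm : Measurable h) (hi : IntegrableOn h (Icc 0 1))
    (h₀ : ∀ u ∈ Icc 0 1, 0 ≤ h u) (h₁ : ∫ u in 0..1, h u = 1)
    (hgm : Measurable g) (hgi : IntegrableOn g (Icc 0 1)) (hg₀ : ∀ u ∈ Icc 0 1, 0 ≤ g u) :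
    winRate r (calProc r g (calReweight r h σ)) (calProc r g σ)
      = (∫ u in 0..1, h u * g (∫ t in 0..u, h t) * ∫ t in 0..u, g t)
          / ((∫ u in 0..1, h u * g (∫ t in 0..u, h t)) * ∫ t in 0..1, g t) := by
  have := isProbabilityMeasure_calReweight hr hσ hm hi h₀ h₁
  have hσh : ∀ t, calReweight r h σ {z | r z = t} = 0 := calReweight_apply_eq_zero hσ
  have hH := aemeasurable_primitive zero_le_one hi
  have hG := aemeasurable_primitive zero_le_one hgi
  -- `∫ g(C_{σ_h}) dσ_h` computed with `C_{σ_h} = H ∘ C_σ`, and with `C_{σ_h}` uniform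
  have hnorm : ∫ u in 0..1, h u * g (∫ t in 0..u, h t) = ∫ t in 0..1, g t := by
    rw [← integral_comp_calReward_calReweight (q := fun u => g (∫ t in 0..u, h t)) hr hσ hm h₀
        (hgm.comp_aemeasurable hH), ← integral_comp_calReward hr hσh hgm.aestronglyMeasurable]
    simp_rw [calReward_calReweight hr hσ hm hi h₀]
  set B := ∫ t in 0..1, g t
  have hB₀ : 0 ≤ B := intervalIntegral.integral_nonneg zero_le_one hg₀
  calc winRate r (calProc r g (calReweight r h σ)) (calProc r g σ)
      = ∫ y, (∫ t in 0..calReward r σ y, g t) / B ∂calProc r g (calReweight r h σ) :=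
        integral_congr_ae (ae_of_all _ fun y => integral_win_calProc hr hσ hgm hgi hg₀ y)
    _ = ∫ y, g (calReward r (calReweight r h σ) y) / B * ((∫ t in 0..calReward r σ y, g t) / B)
          ∂calReweight r h σ := by
        rw [calProc_eq_calReweight hr hσh hgm.aestronglyMeasurable,
          integral_calReweight hr hσh (hgm.div_const B) fun u hu => div_nonneg (hg₀ u hu) hB₀]
    _ = ∫ u in 0..1, h u * (g (∫ t in 0..u, h t) / B * ((∫ t in 0..u, g t) / B)) := by
        simp_rw [calReward_calReweight hr hσ hm hi h₀]
        exact integral_comp_calReward_calReweight hr hσ hm h₀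
          (((hgm.comp_aemeasurable hH).div_const B).mul (hG.div_const B))
    _ = _ := by
        rw [hnorm, ← intervalIntegral.integral_div]
        congr 1 with u
        ring

end CalProc

theorem stmt_13_general {Y : Type*} [MeasurableSpace Y]
    (π₀ : Measure Y) [IsProbabilityMeasure π₀]
    (r : Y → ℝ) (hr : Measurable r)
    (hcont : ∀ t : ℝ, π₀ {z | r z = t} = 0)
    (β : ℝ)
    (Φ : ℝ → ℝ) (hΦm : Measurable Φ)
    (hΦb : ∃ M, ∀ u ∈ Set.Icc (0 : ℝ) 1, |Φ u| ≤ M)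
    (Z : ℝ) (hZ : Z = ∫ u in (0 : ℝ)..1, Real.exp (Φ u / β))
    (πstar : Measure Y)
    (hπstar : πstar = π₀.withDensity fun y =>
      ENNReal.ofReal (Real.exp (Φ (calReward r π₀ y) / β) / Z))
    (g : ℝ → ℝ) (hgm : Measurable g)
    (hg0 : ∀ u ∈ Set.Icc (0 : ℝ) 1, 0 ≤ g u)
    (hgb : ∃ M, ∀ u ∈ Set.Icc (0 : ℝ) 1, g u ≤ M)
    (F : ℝ → ℝ)
    (hF : ∀ u, F u = (∫ t in (0 : ℝ)..u, Real.exp (Φ t / β)) / Z) :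
    (∫ y, ∫ z,
        ((if r z < r y then (1 : ℝ) else 0) + (if r y = r z then 1 / 2 else 0))
          ∂(calProc r g π₀) ∂(calProc r g πstar))
      = (∫ u in (0 : ℝ)..1, Real.exp (Φ u / β) * g (F u) * ∫ t in (0 : ℝ)..u, g t)
          / ((∫ u in (0 : ℝ)..1, Real.exp (Φ u / β) * g (F u))
              * ∫ t in (0 : ℝ)..1, g t) := by
  obtain ⟨M, hM⟩ := hΦb
  obtain ⟨Mg, hMg⟩ := hgb
  set f : ℝ → ℝ := fun u => Real.exp (Φ u / β)
  have hfm : Measurable f := (hΦm.div_const β).exp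
  have hfi : IntegrableOn f (Icc 0 1) :=
    integrableOn_Icc_of_nonneg_of_le hfm (fun u _ => (Real.exp_pos _).le) fun u hu =>
      Real.exp_le_exp.2 ((le_abs_self _).trans
        (abs_div (Φ u) β ▸ div_le_div_of_nonneg_right (hM u hu) (abs_nonneg β)))
  have hgi : IntegrableOn g (Icc 0 1) := integrableOn_Icc_of_nonneg_of_le hgm hg0 hMg
  have hZ₀ : 0 < Z := hZ ▸ intervalIntegral.intervalIntegral_pos_of_pos_on
    (by rwa [uIcc_of_le zero_le_one] : IntegrableOn f (uIcc 0 1)).intervalIntegrable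
    (fun u _ => Real.exp_pos _) one_pos
  have hπ : πstar = calReweight r (fun u => f u / Z) π₀ := hπstar
  have hF' : ∀ u, ∫ t in (0 : ℝ)..u, f t / Z = F u := fun u => by
    rw [intervalIntegral.integral_div, hF]
  change winRate r (calProc r g πstar) (calProc r g π₀) = _
  rw [hπ, winRate_calProc_calReweight hr hcont (hfm.div_const Z) (hfi.div_const Z)
    (fun u _ => by positivity) (by rw [intervalIntegral.integral_div, ← hZ, div_self hZ₀.ne'])
    hgm hgi hg0]
  simp_rw [hF', div_mul_eq_mul_div, intervalIntegral.integral_div, div_mul_eq_mul_div]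
  exact div_div_div_cancel_right₀ hZ₀.ne' _ _

/-- For a calibrated inference-time procedure `T_g` and the
CTRL-aligned policy `π*` (density `e^{Φ(C(y))/β}/Z` w.r.t. `π₀`), the inference-time win
rate `W_r(T_g π* ≻ T_g π₀)` equals
`(∫₀¹ e^{Φ(u)/β} g(F_{Φ,β}(u)) (∫₀ᵘ g) du) / ((∫₀¹ e^{Φ(u)/β} g(F_{Φ,β}(u)) du)·(∫₀¹ g))`;
in particular it depends only on `Φ`, `β` and `g`. -/
theorem stmt_13 {Y : Type*} [MeasurableSpace Y]
    (π₀ : Measure Y) [IsProbabilityMeasure π₀]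
    (r : Y → ℝ) (hr : Measurable r)
    (hcont : ∀ t : ℝ, π₀ {z | r z = t} = 0)
    (β : ℝ) (hβ : 0 < β)
    (Φ : ℝ → ℝ) (hΦm : Measurable Φ)
    (hΦb : ∃ M, ∀ u ∈ Set.Icc (0 : ℝ) 1, |Φ u| ≤ M)
    (Z : ℝ) (hZ : Z = ∫ u in (0 : ℝ)..1, Real.exp (Φ u / β))
    (πstar : Measure Y)
    (hπstar : πstar = π₀.withDensity fun y =>
      ENNReal.ofReal (Real.exp (Φ (calReward r π₀ y) / β) / Z))
    (g : ℝ → ℝ) (hgm : Measurable g)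
    (hg0 : ∀ u ∈ Set.Icc (0 : ℝ) 1, 0 ≤ g u)
    (hgb : ∃ M, ∀ u ∈ Set.Icc (0 : ℝ) 1, g u ≤ M)
    (hgpos : 0 < ∫ t in (0 : ℝ)..1, g t)
    (F : ℝ → ℝ)
    (hF : ∀ u, F u = (∫ t in (0 : ℝ)..u, Real.exp (Φ t / β)) / Z) :
    (∫ y, ∫ z,
        ((if r z < r y then (1 : ℝ) else 0) + (if r y = r z then 1 / 2 else 0))
          ∂(calProc r g π₀) ∂(calProc r g πstar))
      = (∫ u in (0 : ℝ)..1, Real.exp (Φ u / β) * g (F u) * ∫ t in (0 : ℝ)..u, g t)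
          / ((∫ u in (0 : ℝ)..1, Real.exp (Φ u / β) * g (F u))
              * ∫ t in (0 : ℝ)..1, g t) :=
  stmt_13_general π₀ r hr hcont β Φ hΦm hΦb Z hZ πstar hπstar g hgm hg0 hgb F hF
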